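/- arXiv:1110.0992 — 4 statements merged into one kernel-verified Lean document; each statement's English description precedes it below -/
import Mathlib

section
/- Let ν, F : ℕ → ℂ with |ν| ≤ 1, |F| ≤ 1, let P and Q be finite sets of positive integers such that every p ∈ P is coprime to every q ∈ Q and the map P × Q → ℕ, (p,q) ↦ pq, is injective. Then |∑_{p∈P, q∈Q} ν(pq)F(pq)| ≤ |Q|^{1/2} · (∑_{p₁,p₂∈P} |∑_{q∈Q'} F(p₁ q) conj(F(p₂ q))|)^{1/2} for any finite set Q' ⊇ Q of positive integers, where ν is multiplicative on coprime arguments. -/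
/-!
Multiplicativity on coprime pairs factors `ν (p * q) = ν p * ν q`, so the double sum is
`∑ q, ν q * g q` with `g q = ∑ p, ν p * F (p * q)`. Dropping `ν q` and applying Cauchy–Schwarz
in `q` bounds it by `√|Q| * (∑_{q ∈ Q'} |g q|²)^{1/2}`; expanding `|g q|²` as a double sum over
`p₁, p₂` and dropping the weights `ν p₁ * conj (ν p₂)` gives the bilinear correlation sum.
-/

open Finset

section

variable {ι κ 𝕜 : Type*} [RCLike 𝕜]

theorem norm_sum_mul_le_sqrt_card_mul_sqrt_sum_sq {s t : Finset ι} (hst : s ⊆ t)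
    {a : ι → 𝕜} (ha : ∀ i ∈ s, ‖a i‖ ≤ 1) (b : ι → 𝕜) :
    ‖∑ i ∈ s, a i * b i‖ ≤ √(#s : ℝ) * √(∑ i ∈ t, ‖b i‖ ^ 2) := by
  have hweights : ‖∑ i ∈ s, a i * b i‖ ≤ ∑ i ∈ s, ‖b i‖ :=
    (norm_sum_le _ _).trans <| sum_le_sum fun i hi => by
      rw [norm_mul]; exact mul_le_of_le_one_left (norm_nonneg _) (ha i hi)
  have hcs : (∑ i ∈ s, ‖b i‖) ^ 2 ≤ #s * ∑ i ∈ t, ‖b i‖ ^ 2 :=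
    sq_sum_le_card_mul_sum_sq.trans <| mul_le_mul_of_nonneg_left
      (sum_le_sum_of_subset_of_nonneg hst fun _ _ _ => by positivity) (Nat.cast_nonneg _)
  rw [← Real.sqrt_mul (Nat.cast_nonneg _)]
  exact hweights.trans (Real.le_sqrt_of_sq_le hcs)

theorem sum_norm_sum_mul_sq_le_sum_sum_norm_sum {S : Finset ι} {c : ι → 𝕜}
    (hc : ∀ i ∈ S, ‖c i‖ ≤ 1) (T : Finset κ) (f : ι → κ → 𝕜) :
    ∑ k ∈ T, ‖∑ i ∈ S, c i * f i k‖ ^ 2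
      ≤ ∑ i ∈ S, ∑ j ∈ S, ‖∑ k ∈ T, f i k * starRingEnd 𝕜 (f j k)‖ := by
  have hexpand : ((∑ k ∈ T, ‖∑ i ∈ S, c i * f i k‖ ^ 2 : ℝ) : 𝕜) =
      ∑ i ∈ S, ∑ j ∈ S, c i * starRingEnd 𝕜 (c j) *
        ∑ k ∈ T, f i k * starRingEnd 𝕜 (f j k) := by
    push_cast
    simp only [← RCLike.mul_conj, map_sum, sum_mul_sum]
    simp only [mul_sum]
    rw [sum_comm]
    refine sum_congr rfl fun i _ => ?_
    rw [sum_comm]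
    exact sum_congr rfl fun j _ => sum_congr rfl fun k _ => by rw [map_mul]; ring
  calc ∑ k ∈ T, ‖∑ i ∈ S, c i * f i k‖ ^ 2
      = ‖((∑ k ∈ T, ‖∑ i ∈ S, c i * f i k‖ ^ 2 : ℝ) : 𝕜)‖ := by
        rw [RCLike.norm_ofReal, abs_of_nonneg (by positivity)]
    _ ≤ ∑ i ∈ S, ∑ j ∈ S, ‖c i * starRingEnd 𝕜 (c j) *
          ∑ k ∈ T, f i k * starRingEnd 𝕜 (f j k)‖ := by
        rw [hexpand]
        exact (norm_sum_le _ _).trans (sum_le_sum fun i _ => norm_sum_le _ _)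
    _ ≤ ∑ i ∈ S, ∑ j ∈ S, ‖∑ k ∈ T, f i k * starRingEnd 𝕜 (f j k)‖ := by
        gcongr with i hi j hj
        rw [norm_mul, norm_mul, RCLike.norm_conj]
        exact mul_le_of_le_one_left (norm_nonneg _)
          (mul_le_one₀ (hc i hi) (norm_nonneg _) (hc j hj))

end

theorem sum_sum_mul_eq_sum_mul_sum_of_coprime {R : Type*} [CommSemiring R] {ν : ℕ → R}
    (hmult : ∀ m n : ℕ, Nat.Coprime m n → ν (m * n) = ν m * ν n) {P Q : Finset ℕ}
    (hcop : ∀ p ∈ P, ∀ q ∈ Q, Nat.Coprime p q) (F : ℕ → R) :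
    ∑ p ∈ P, ∑ q ∈ Q, ν (p * q) * F (p * q) = ∑ q ∈ Q, ν q * ∑ p ∈ P, ν p * F (p * q) := by
  rw [sum_comm]
  refine sum_congr rfl fun q hq => ?_
  rw [mul_sum]
  refine sum_congr rfl fun p hp => ?_
  rw [hmult p q (hcop p hp q hq)]
  ring

theorem cauchy_schwarz_step_general (ν F : ℕ → ℂ)
    (hν : ∀ n, ‖ν n‖ ≤ 1)
    (hmult : ∀ m n : ℕ, Nat.Coprime m n → ν (m * n) = ν m * ν n)
    (P Q Q' : Finset ℕ)
    (hcop : ∀ p ∈ P, ∀ q ∈ Q, Nat.Coprime p q)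
    (hQQ' : Q ⊆ Q') :
    ‖∑ p ∈ P, ∑ q ∈ Q, ν (p * q) * F (p * q)‖
      ≤ Real.sqrt (Q.card : ℝ) *
        Real.sqrt (∑ p₁ ∈ P, ∑ p₂ ∈ P,
          ‖∑ q ∈ Q', F (p₁ * q) * (starRingEnd ℂ) (F (p₂ * q))‖) := by
  rw [sum_sum_mul_eq_sum_mul_sum_of_coprime hmult hcop]
  refine (norm_sum_mul_le_sqrt_card_mul_sqrt_sum_sq hQQ' (fun q _ => hν q) _).trans ?_
  gcongr
  exact sum_norm_sum_mul_sq_le_sum_sum_norm_sum (fun p _ => hν p) Q' fun p q => F (p * q)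

/-- The Cauchy–Schwarz step (2.17) of the bilinear sums method. -/
theorem cauchy_schwarz_step (ν F : ℕ → ℂ)
    (hν : ∀ n, ‖ν n‖ ≤ 1)
    (hF : ∀ n, ‖F n‖ ≤ 1)
    (hmult : ∀ m n : ℕ, Nat.Coprime m n → ν (m * n) = ν m * ν n)
    (P Q Q' : Finset ℕ)
    (hP : ∀ p ∈ P, 0 < p) (hQ : ∀ q ∈ Q, 0 < q) (hQ' : ∀ q ∈ Q', 0 < q)
    (hcop : ∀ p ∈ P, ∀ q ∈ Q, Nat.Coprime p q)
    (hinj : ∀ p₁ ∈ P, ∀ q₁ ∈ Q, ∀ p₂ ∈ P, ∀ q₂ ∈ Q,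
      p₁ * q₁ = p₂ * q₂ → p₁ = p₂ ∧ q₁ = q₂)
    (hQQ' : Q ⊆ Q') :
    ‖∑ p ∈ P, ∑ q ∈ Q, ν (p * q) * F (p * q)‖
      ≤ Real.sqrt (Q.card : ℝ) *
        Real.sqrt (∑ p₁ ∈ P, ∑ p₂ ∈ P,
          ‖∑ q ∈ Q', F (p₁ * q) * (starRingEnd ℂ) (F (p₂ * q))‖) :=
  cauchy_schwarz_step_general ν F hν hmult P Q Q' hcop hQQ'
end

section
/- Let A = (a,b/ℚ) be a quaternion division algebra over ℚ (a, b ∈ ℚ, a > 0). Suppose δ = x₀ + x₁ω + x₂Ω + x₃ωΩ ∈ A with x_i ∈ ℚ and N(δ) > 0, and suppose the matrix φ(δ) ∈ GL₂(ℝ) has rational trace s and rational positive determinant t, and its eigenvalues λ, μ satisfy λ/μ ∈ ℚ. Then λ = μ; in particular x₁ = x₂ = x₃ = 0 and δ is a rational scalar. -/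
/-- Core of Lemma 2 of Bourgain–Sarnak–Ziegler: if `δ ∈ A = (a,b/ℚ)` (a
quaternion division algebra over `ℚ`) has positive norm, and the eigenvalues
`λ, μ` of `φ(δ)` (so `λ + μ = trace φ(δ) = 2x₀ ∈ ℚ`,
`λμ = det φ(δ) = N(δ) ∈ ℚ_{>0}`) have rational ratio, then `λ = μ`; in
particular `x₁ = x₂ = x₃ = 0` and `δ` is a rational scalar. -/
theorem quaternion_rational_eigenvalue_ratio (a b : ℚ) (ha : 0 < a)
    (hdiv : ∀ y₀ y₁ y₂ y₃ : ℚ,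
      y₀ ^ 2 - a * y₁ ^ 2 - b * y₂ ^ 2 + a * b * y₃ ^ 2 = 0 →
      y₀ = 0 ∧ y₁ = 0 ∧ y₂ = 0 ∧ y₃ = 0)
    (x₀ x₁ x₂ x₃ : ℚ)
    (hN : 0 < x₀ ^ 2 - a * x₁ ^ 2 - b * x₂ ^ 2 + a * b * x₃ ^ 2)
    (lam mu : ℝ) (hmu : mu ≠ 0)
    (hsum : lam + mu = 2 * (x₀ : ℝ))
    (hprod : lam * mu = ((x₀ ^ 2 - a * x₁ ^ 2 - b * x₂ ^ 2 + a * b * x₃ ^ 2 : ℚ) : ℝ))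
    (hrat : ∃ r : ℚ, (r : ℝ) = lam / mu) :
    lam = mu ∧ x₁ = 0 ∧ x₂ = 0 ∧ x₃ = 0 := by
  obtain ⟨r, hr⟩ := hrat
  have hlam : lam = (r : ℝ) * mu := by
    rw [hr]; field_simp
  -- r ≠ -1
  have hr1 : (r : ℝ) + 1 ≠ 0 := by
    intro h
    have hs0 : lam + mu = 0 := by
      have h2 : lam + mu = ((r : ℝ) + 1) * mu := by rw [hlam]; ring
      rw [h2, h, zero_mul]
    have hlm : lam = -mu := by linarith
    have : lam * mu = -(mu * mu) := by rw [hlm]; ring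
    rw [hprod] at this
    have hpos : (0 : ℝ) < ((x₀ ^ 2 - a * x₁ ^ 2 - b * x₂ ^ 2 + a * b * x₃ ^ 2 : ℚ) : ℝ) := by
      exact_mod_cast hN
    nlinarith [mul_self_nonneg mu]
  -- mu is rational
  set m : ℚ := 2 * x₀ / (r + 1) with hm
  have hrq1 : r + 1 ≠ 0 := by
    intro h; apply hr1; exact_mod_cast congrArg (Rat.cast : ℚ → ℝ) h
  have hmu_eq : mu = (m : ℝ) := by
    have : ((r : ℝ) + 1) * mu = 2 * (x₀ : ℝ) := by rw [← hsum, hlam]; ring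
    rw [hm]
    push_cast
    field_simp
    linarith [this]
  have hlam_eq : lam = ((r * m : ℚ) : ℝ) := by
    rw [hlam, hmu_eq]; push_cast; ring
  set l : ℚ := r * m with hl
  -- product equation over ℚ
  have hprodQ : l * m = x₀ ^ 2 - a * x₁ ^ 2 - b * x₂ ^ 2 + a * b * x₃ ^ 2 := by
    have : ((l * m : ℚ) : ℝ) = ((x₀ ^ 2 - a * x₁ ^ 2 - b * x₂ ^ 2 + a * b * x₃ ^ 2 : ℚ) : ℝ) := by
      rw [← hprod, hlam_eq, hmu_eq]; push_cast; ring
    exact_mod_cast this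
  have hsumQ : l + m = 2 * x₀ := by
    have h2 : ((l + m : ℚ) : ℝ) = 2 * (x₀ : ℝ) := by
      push_cast; rw [← hlam_eq, ← hmu_eq]; exact hsum
    exact_mod_cast h2
  have key : ((l - m) / 2) ^ 2 - a * x₁ ^ 2 - b * x₂ ^ 2 + a * b * x₃ ^ 2 = 0 := by
    linear_combination ((l + m + 2 * x₀) / 4) * hsumQ - hprodQ
  obtain ⟨h0, h1, h2, h3⟩ := hdiv ((l - m) / 2) x₁ x₂ x₃ key
  have hlm : l = m := by
    have : l - m = 0 := by linarith [h0]
    linarith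
  refine ⟨?_, h1, h2, h3⟩
  rw [hlam_eq, hmu_eq]; exact_mod_cast hlm
end

section
/- Let Γ be a lattice in SL₂(ℝ) commensurable with a cocompact arithmetic lattice arising from a quaternion division algebra A over ℚ, and for z ∈ ℙ¹(ℝ) let C(Γ, z) = χ_z(COM(Γ) ∩ P_z) ⊆ ℝ_{>0}, where P_z is the stabilizer of z and χ_z the eigenvalue-ratio character. Then C(Γ, z) ∩ ℚ* = {1} for every z. -/
/-!
Conjugation by an element `g` of the commensurator preserves `φ(A(ℚ))`. Indeed `Λ ∩ g⁻¹ Λ g` has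
finite index in `Λ`, so it contains powers `φ(α)`, `φ(β)` of two Pell units of `Λ`, taken in the
real quadratic subfields `ℚ(i)` and `ℚ(j)` or `ℚ(ij)`; these powers are not central, and
`1, α, β, αβ` is a `ℚ`-basis of `A(ℚ)`. Hence conjugation by `g` has a rational matrix in the basis
`φ(1), φ(i), φ(j), φ(ij)` of `M₂(ℝ)`.

If `g v = c v`, the rank-one matrix `v ⊗ (-v₁, v₀)` is an eigenvector of this conjugation with
eigenvalue `c²`. When `c² = r` is rational, there is then a rational eigenvector `φ(x)`, `x ≠ 0`,
and taking determinants gives `N(x) = r² N(x)`. Since `A` is a division algebra, `N(x) ≠ 0`, so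
`r² = 1` and `r = 1`.
-/

/-- `SL₂(ℝ)`. -/
abbrev SL2R := Matrix.SpecialLinearGroup (Fin 2) ℝ

/-- The conjugate subgroup `g⁻¹ Γ g`. -/
def conjSubgroup (g : SL2R) (Γ : Subgroup SL2R) : Subgroup SL2R :=
  Subgroup.map ((MulAut.conj g⁻¹).toMonoidHom) Γ

/-- The commensurator of `Γ` in `SL₂(ℝ)` as a set. -/
def commenSet (Γ : Subgroup SL2R) : Set SL2R :=
  {g | (conjSubgroup g Γ).relIndex Γ ≠ 0 ∧ Γ.relIndex (conjSubgroup g Γ) ≠ 0}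

/-- The embedding `φ` of the quaternion algebra `(a,b/ℚ)` into `M₂(ℝ)`:
`φ(x₀ + x₁ω + x₂Ω + x₃ωΩ) = (ξ̄, η; b η̄, ξ)`, `ξ = x₀ - x₁√a`, `η = x₂ + x₃√a`. -/
noncomputable def phiMat (a b : ℚ) (x₀ x₁ x₂ x₃ : ℤ) : Matrix (Fin 2) (Fin 2) ℝ :=
  !![(x₀ : ℝ) + x₁ * Real.sqrt a, (x₂ : ℝ) + x₃ * Real.sqrt a;
     (b : ℝ) * ((x₂ : ℝ) - x₃ * Real.sqrt a), (x₀ : ℝ) - x₁ * Real.sqrt a]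

open Matrix Quaternion Pointwise

theorem Matrix.exists_mulVec_eq_smul_of_map {K L ι : Type*} [Field K] [Field L] [Fintype ι]
    [DecidableEq ι] (f : K →+* L) (M : Matrix ι ι K) (r : K) {z : ι → L} (hz : z ≠ 0)
    (h : M.map f *ᵥ z = f r • z) : ∃ y : ι → K, y ≠ 0 ∧ M *ᵥ y = r • y := by
  have hdet : f (M - r • 1).det = 0 := by
    rw [RingHom.map_det, ← exists_mulVec_eq_zero_iff]
    refine ⟨z, hz, ?_⟩
    simp [RingHom.mapMatrix_apply, Matrix.map_sub, sub_mulVec, h, smul_one_eq_diagonal]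
  obtain ⟨y, hy, hMy⟩ := exists_mulVec_eq_zero_iff.mpr ((map_eq_zero f).mp hdet)
  exact ⟨y, hy, by rwa [sub_mulVec, smul_mulVec, one_mulVec, sub_eq_zero] at hMy⟩

theorem LinearMap.exists_eigenvector_of_map {K L W ι : Type*} [Field K] [Field L]
    [AddCommGroup W] [Module L W] [Fintype ι] [DecidableEq ι] (f : K →+* L)
    (Φ : (ι → L) ≃ₗ[L] W) (C : W →ₗ[L] W)
    (hC : ∀ y : ι → K, ∃ y' : ι → K, C (Φ (f ∘ y)) = Φ (f ∘ y')) {r : K} {w : W} (hw : w ≠ 0)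
    (hCw : C w = f r • w) : ∃ y : ι → K, y ≠ 0 ∧ C (Φ (f ∘ y)) = f r • Φ (f ∘ y) := by
  choose col hcol using fun j => hC (Pi.single j 1)
  set M : Matrix ι ι K := Matrix.of fun i j => col j i
  have hM : ∀ z, C (Φ z) = Φ (M.map f *ᵥ z) := by
    suffices C ∘ₗ Φ.toLinearMap = Φ.toLinearMap ∘ₗ (M.map f).mulVecLin from
      fun z => LinearMap.congr_fun this z
    refine LinearMap.pi_ext' fun j => LinearMap.ext_ring ?_
    have hsingle : f ∘ (Pi.single j 1 : ι → K) = Pi.single j 1 := by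
      ext i; by_cases hij : i = j <;> simp [hij]
    simp only [LinearMap.comp_apply, LinearMap.coe_single, LinearEquiv.coe_coe,
      mulVecLin_apply, mulVec_single_one]
    rw [← hsingle, hcol j]
    rfl
  have hz : Φ.symm w ≠ 0 := by simpa using hw
  obtain ⟨y, hy, hMy⟩ := M.exists_mulVec_eq_smul_of_map f r hz <| Φ.injective <| by
    rw [← hM, LinearEquiv.apply_symm_apply, hCw, map_smul, LinearEquiv.apply_symm_apply]
  refine ⟨y, hy, ?_⟩
  have hmap : M.map f *ᵥ (f ∘ y) = f r • (f ∘ y) := by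
    ext i; rw [← RingHom.map_mulVec, hMy]; simp
  rw [hM, hmap, map_smul]

/-- `(-v₁, v₀)` is a left eigenvector of `g` for the eigenvalue `c⁻¹`, since `det g = 1`. -/
theorem Matrix.mul_vecMulVec_eq_sq_smul {R : Type*} [CommRing R] {g : Matrix (Fin 2) (Fin 2) R}
    (hg : g.det = 1) {v : Fin 2 → R} {c : R} (hv : g *ᵥ v = c • v) :
    g * vecMulVec v ![-v 1, v 0] = c ^ 2 • (vecMulVec v ![-v 1, v 0] * g) := by
  have h₀ : g 0 0 * v 0 + g 0 1 * v 1 = c * v 0 := by simpa [mulVec, dotProduct] using congrFun hv 0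
  have h₁ : g 1 0 * v 0 + g 1 1 * v 1 = c * v 1 := by simpa [mulVec, dotProduct] using congrFun hv 1
  rw [det_fin_two] at hg
  have hu : c • (![-v 1, v 0] ᵥ* g) = ![-v 1, v 0] := by
    ext i
    fin_cases i <;>
      simp only [Fin.zero_eta, Fin.mk_one, Fin.isValue, Pi.smul_apply, vecMul, dotProduct,
        Fin.sum_univ_two, cons_val_zero, cons_val_one, cons_val_fin_one, neg_mul, smul_eq_mul]
    · linear_combination -g 1 0 * h₀ + g 0 0 * h₁ - v 1 * hg
    · linear_combination -g 1 1 * h₀ + g 0 1 * h₁ + v 0 * hg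
  rw [mul_vecMulVec, vecMulVec_mul, hv, smul_vecMulVec, pow_two, mul_smul,
    ← vecMulVec_smul c v (![-v 1, v 0] ᵥ* g), hu]

theorem Rat.exists_pos_sq_sub_mul_sq_eq_one {q : ℚ} (hq : 0 < q) (hns : ¬IsSquare q) :
    ∃ x y : ℤ, 0 < x ∧ 0 < y ∧ (x : ℚ) ^ 2 - q * (y : ℚ) ^ 2 = 1 := by
  have hnum : q * q.den = q.num := Rat.mul_den_eq_num q
  have hd : 0 < q.num * q.den := mul_pos (Rat.num_pos.mpr hq) (by exact_mod_cast q.den_pos)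
  have hdns : ¬IsSquare (q.num * q.den) := by
    rintro ⟨e, he⟩
    refine hns ⟨e / q.den, ?_⟩
    rw [div_mul_div_comm, eq_div_iff (by positivity), ← mul_assoc, hnum]
    exact_mod_cast he
  obtain ⟨s, hsx, hsy⟩ := Pell.Solution₁.exists_pos_of_not_isSquare hd hdns
  refine ⟨s.x, q.den * s.y, by omega, by positivity, ?_⟩
  have h : (s.x : ℚ) ^ 2 - (q.num * q.den : ℚ) * s.y ^ 2 = 1 := by exact_mod_cast s.prop
  rw [← hnum] at h
  push_cast
  linear_combination h

theorem exists_pow_succ_eq_algebraMap_add_smul {K R : Type*} [Field K] [LinearOrder K]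
    [IsStrictOrderedRing K] [Ring R] [Algebra K R] {e : R} {q : K} (hq : 0 < q)
    (he : e * e = algebraMap K R q) {x y : K} (hx : 0 < x) (hy : 0 < y) (n : ℕ) :
    ∃ X Y : K, 0 < X ∧ 0 < Y ∧
      (algebraMap K R x + y • e) ^ (n + 1) = algebraMap K R X + Y • e := by
  induction n with
  | zero => exact ⟨x, y, hx, hy, pow_one _⟩
  | succ n ih =>
    obtain ⟨X, Y, hX, hY, h⟩ := ih
    refine ⟨X * x + q * (Y * y), X * y + Y * x, by positivity, by positivity, ?_⟩
    rw [pow_succ, h]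
    simp only [Algebra.algebraMap_eq_smul_one] at he ⊢
    simp only [add_mul, mul_add, Algebra.mul_smul_comm, Algebra.smul_mul_assoc, mul_one, one_mul,
      he]
    module

section Conjugation

theorem mem_conjSubgroup {g x : SL2R} {Γ : Subgroup SL2R} :
    x ∈ conjSubgroup g Γ ↔ g * x * g⁻¹ ∈ Γ := by
  rw [conjSubgroup, Subgroup.mem_map_equiv]
  simp

theorem conjSubgroup_eq_toConjAct_smul (g : SL2R) (Γ : Subgroup SL2R) :
    conjSubgroup g Γ = ConjAct.toConjAct g⁻¹ • Γ := by
  ext x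
  simp [mem_conjSubgroup, Subgroup.mem_pointwise_smul_iff_inv_smul_mem, ConjAct.smul_def]

theorem commenSet_eq_commensurator (Γ : Subgroup SL2R) :
    commenSet Γ = Subgroup.Commensurable.commensurator Γ := by
  ext g
  rw [SetLike.mem_coe, ← inv_mem_iff, Subgroup.Commensurable.commensurator_mem_iff,
    ← conjSubgroup_eq_toConjAct_smul]
  rfl

noncomputable def conjAlgHom (R : Type*) [CommSemiring R] [Algebra R ℝ] (g : SL2R) :
    Matrix (Fin 2) (Fin 2) ℝ →ₐ[R] Matrix (Fin 2) (Fin 2) ℝ :=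
  MulSemiringAction.toAlgHom R _ (ConjAct.toConjAct (Matrix.SpecialLinearGroup.toGL g))

theorem conjAlgHom_apply (R : Type*) [CommSemiring R] [Algebra R ℝ] (g : SL2R)
    (X : Matrix (Fin 2) (Fin 2) ℝ) :
    conjAlgHom R g X = g * X * (↑g⁻¹ : Matrix (Fin 2) (Fin 2) ℝ) := by
  simp [conjAlgHom, ConjAct.units_smul_def, Matrix.SpecialLinearGroup.coe_inv, Matrix.inv_def]

theorem relIndex_conjSubgroup_ne_zero {Γ Λ : Subgroup SL2R} (hcomm : Γ.Commensurable Λ)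
    {g : SL2R} (hg : g ∈ commenSet Γ) : (conjSubgroup g Λ).relIndex Λ ≠ 0 := by
  rw [commenSet_eq_commensurator, Subgroup.Commensurable.eq hcomm,
    ← commenSet_eq_commensurator] at hg
  exact hg.1

theorem exists_conjAlgHom_eq_sq_smul {g : SL2R} {v : Fin 2 → ℝ} (hv : v ≠ 0) {c : ℝ}
    (hgv : (g : Matrix (Fin 2) (Fin 2) ℝ) *ᵥ v = c • v) :
    ∃ N ≠ 0, conjAlgHom ℝ g N = c ^ 2 • N := by
  refine ⟨vecMulVec v ![-v 1, v 0], vecMulVec_ne_zero hv fun h => hv ?_, ?_⟩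
  · ext i; fin_cases i
    exacts [by simpa using congrFun h 1, by simpa using congrFun h 0]
  · rw [conjAlgHom_apply, mul_vecMulVec_eq_sq_smul g.det_coe hgv, smul_mul_assoc, mul_assoc,
      ← Matrix.SpecialLinearGroup.coe_mul, mul_inv_cancel, Matrix.SpecialLinearGroup.coe_one,
      mul_one]

end Conjugation

namespace QuaternionAlgebra

/-- `ℍ[ℚ,a,b]` is a division algebra. -/
def NormFormAnisotropic (a b : ℚ) : Prop :=
  ∀ y₀ y₁ y₂ y₃ : ℚ, y₀ ^ 2 - a * y₁ ^ 2 - b * y₂ ^ 2 + a * b * y₃ ^ 2 = 0 →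
    y₀ = 0 ∧ y₁ = 0 ∧ y₂ = 0 ∧ y₃ = 0

/-- `Λ = φ(A₁(ℤ))`. -/
def IsIntegralNormOneImage (a b : ℚ) (Λ : Subgroup SL2R) : Prop :=
  (Λ : Set SL2R) = {g : SL2R | ∃ x₀ x₁ x₂ x₃ : ℤ,
    (x₀ : ℚ) ^ 2 - a * x₁ ^ 2 - b * x₂ ^ 2 + a * b * x₃ ^ 2 = 1 ∧
    (g : Matrix (Fin 2) (Fin 2) ℝ) = phiMat a b x₀ x₁ x₂ x₃}

variable {a b : ℚ}

noncomputable def splitBasis (a b : ℚ) (ha : 0 ≤ a) :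
    QuaternionAlgebra.Basis (Matrix (Fin 2) (Fin 2) ℝ) a 0 b where
  i := !![√a, 0; 0, -√a]
  j := !![0, 1; (b : ℝ), 0]
  k := !![0, √a; -(b * √a), 0]
  i_mul_i := by
    ext i j
    fin_cases i <;> fin_cases j <;>
      simp [Rat.smul_def, Real.mul_self_sqrt (Rat.cast_nonneg.mpr ha)]
  j_mul_j := by ext i j; fin_cases i <;> fin_cases j <;> simp [Rat.smul_def]
  i_mul_j := by ext i j; fin_cases i <;> fin_cases j <;> simp [mul_comm]
  j_mul_i := by ext i j; fin_cases i <;> fin_cases j <;> simp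

noncomputable def splitHom (a b : ℚ) (ha : 0 ≤ a) :
    ℍ[ℚ,a,b] →ₐ[ℚ] Matrix (Fin 2) (Fin 2) ℝ :=
  (splitBasis a b ha).liftHom

theorem splitHom_apply (ha : 0 ≤ a) (x : ℍ[ℚ,a,b]) :
    splitHom a b ha x = !![x.re + x.imI * √a, x.imJ + x.imK * √a;
      b * (x.imJ - x.imK * √a), x.re - x.imI * √a] := by
  ext i j
  fin_cases i <;> fin_cases j <;>
    simp [splitHom, Basis.lift, splitBasis, Rat.smul_def, Algebra.algebraMap_eq_smul_one] <;> ring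

theorem phiMat_eq_splitHom (ha : 0 ≤ a) (x₀ x₁ x₂ x₃ : ℤ) :
    phiMat a b x₀ x₁ x₂ x₃ = splitHom a b ha ⟨x₀, x₁, x₂, x₃⟩ := by
  simp [splitHom_apply, phiMat]

theorem det_splitHom (ha : 0 ≤ a) (x : ℍ[ℚ,a,b]) :
    (splitHom a b ha x).det =
      ((x.re ^ 2 - a * x.imI ^ 2 - b * x.imJ ^ 2 + a * b * x.imK ^ 2 : ℚ) : ℝ) := by
  rw [splitHom_apply, det_fin_two_of]
  push_cast
  linear_combination (x.imK ^ 2 * b - x.imI ^ 2 : ℝ) * Real.sq_sqrt (Rat.cast_nonneg.mpr ha)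

noncomputable def realSplit (a b : ℚ) : (Fin 4 → ℝ) →ₗ[ℝ] Matrix (Fin 2) (Fin 2) ℝ where
  toFun z := !![z 0 + z 1 * √a, z 2 + z 3 * √a; b * (z 2 - z 3 * √a), z 0 - z 1 * √a]
  map_add' z w := by ext i j; fin_cases i <;> fin_cases j <;> simp <;> ring
  map_smul' c z := by ext i j; fin_cases i <;> fin_cases j <;> simp <;> ring

theorem splitHom_linearEquivTuple_symm (ha : 0 ≤ a) (y : Fin 4 → ℚ) :
    splitHom a b ha ((linearEquivTuple a 0 b).symm y) = realSplit a b (Rat.castHom ℝ ∘ y) := by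
  simp [splitHom_apply, realSplit, equivTuple]

theorem realSplit_injective (ha : 0 < a) (hb : b ≠ 0) : Function.Injective (realSplit a b) := by
  have hs : √(a : ℝ) ≠ 0 := by positivity
  rw [← LinearMap.ker_eq_bot, LinearMap.ker_eq_bot']
  intro z hz
  have h₀₀ := congrFun₂ hz 0 0
  have h₀₁ := congrFun₂ hz 0 1
  have h₁₀ := congrFun₂ hz 1 0
  have h₁₁ := congrFun₂ hz 1 1
  simp only [realSplit, Fin.isValue, LinearMap.coe_mk, AddHom.coe_mk, of_apply, cons_val',
    cons_val_zero, cons_val_one, cons_val_fin_one, Matrix.zero_apply, mul_eq_zero, Rat.cast_eq_zero,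
    hb, false_or] at h₀₀ h₀₁ h₁₀ h₁₁
  have h₁ : z 1 = 0 := by simpa [hs] using (by linarith : z 1 * √(a : ℝ) = 0)
  have h₃ : z 3 = 0 := by simpa [hs] using (by linarith : z 3 * √(a : ℝ) = 0)
  ext i
  fin_cases i <;> simp only [Fin.zero_eta, Fin.mk_one, Fin.reduceFinMk, Fin.isValue, Pi.zero_apply]
    <;> linarith

noncomputable def realSplitEquiv (ha : 0 < a) (hb : b ≠ 0) :
    (Fin 4 → ℝ) ≃ₗ[ℝ] Matrix (Fin 2) (Fin 2) ℝ :=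
  .ofBijective (realSplit a b) ⟨realSplit_injective ha hb,
    (LinearMap.injective_iff_surjective_of_finrank_eq_finrank
      (by simp [Module.finrank_matrix])).mp (realSplit_injective ha hb)⟩

@[simp]
theorem realSplitEquiv_apply (ha : 0 < a) (hb : b ≠ 0) (z : Fin 4 → ℝ) :
    realSplitEquiv ha hb z = realSplit a b z := rfl

theorem span_one_mul_eq_top (hns : ¬IsSquare a) {A₀ A₁ B₀ B₂ B₃ : ℚ}
    (hA : A₁ ≠ 0) (hB : B₂ ≠ 0 ∨ B₃ ≠ 0) :
    Submodule.span ℚ (Set.range ![1, (⟨A₀, A₁, 0, 0⟩ : ℍ[ℚ,a,b]), ⟨B₀, 0, B₂, B₃⟩,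
      ⟨A₀, A₁, 0, 0⟩ * ⟨B₀, 0, B₂, B₃⟩]) = ⊤ := by
  have hB' : B₂ ^ 2 - a * B₃ ^ 2 ≠ 0 := by
    intro h
    rcases eq_or_ne B₃ 0 with h₃ | h₃
    · simp_all
    · exact hns ⟨B₂ / B₃, by field_simp; linear_combination -h⟩
  refine ((Module.Basis.is_basis_iff_det (basisOneIJK a 0 b)).mpr ?_).2
  rw [Module.Basis.det_apply, isUnit_iff_ne_zero]
  convert mul_ne_zero (pow_ne_zero 2 hA) hB' using 1
  simp [Module.Basis.toMatrix, Matrix.det_succ_row_zero, Fin.sum_univ_succ]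
  ring

namespace NormFormAnisotropic

theorem ne_zero_right (hdiv : NormFormAnisotropic a b) : b ≠ 0 := fun hb => by
  simpa using (hdiv 0 0 1 0 (by rw [hb]; ring)).2.2.1

theorem not_isSquare_left (hdiv : NormFormAnisotropic a b) : ¬IsSquare a := fun ⟨e, he⟩ => by
  simpa using (hdiv e 1 0 0 (by rw [he]; ring)).2.1

theorem not_isSquare_right (hdiv : NormFormAnisotropic a b) : ¬IsSquare b := fun ⟨e, he⟩ => by
  simpa using (hdiv e 0 1 0 (by rw [he]; ring)).2.2.1

theorem not_isSquare_neg_mul (hdiv : NormFormAnisotropic a b) : ¬IsSquare (-(a * b)) :=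
  fun ⟨e, he⟩ => by simpa using (hdiv e 0 0 1 (by linear_combination -he)).2.2.2

theorem eq_zero (hdiv : NormFormAnisotropic a b) {x : ℍ[ℚ,a,b]}
    (hx : x.re ^ 2 - a * x.imI ^ 2 - b * x.imJ ^ 2 + a * b * x.imK ^ 2 = 0) : x = 0 := by
  obtain ⟨h₀, h₁, h₂, h₃⟩ := hdiv _ _ _ _ hx
  ext <;> assumption

end NormFormAnisotropic

section Lattice

variable {Λ : Subgroup SL2R}

theorem exists_mem_coe_eq_splitHom (ha : 0 ≤ a) (hΛ : IsIntegralNormOneImage a b Λ)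
    (n₁ n₂ n₃ : ℤ) (hq : 0 < a * n₁ ^ 2 + b * n₂ ^ 2 - a * b * n₃ ^ 2)
    (hns : ¬IsSquare (a * n₁ ^ 2 + b * n₂ ^ 2 - a * b * n₃ ^ 2)) :
    ∃ u ∈ Λ, ∃ x y : ℚ, 0 < x ∧ 0 < y ∧ (u : Matrix (Fin 2) (Fin 2) ℝ) =
      splitHom a b ha (algebraMap ℚ _ x + y • ⟨0, n₁, n₂, n₃⟩) := by
  obtain ⟨x, y, hx, hy, hxy⟩ := Rat.exists_pos_sq_sub_mul_sq_eq_one hq hns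
  have hε : algebraMap ℚ ℍ[ℚ,a,b] x + (y : ℚ) • ⟨0, n₁, n₂, n₃⟩ =
      ⟨x, y * n₁, y * n₂, y * n₃⟩ := by
    ext <;> simp
  have hdet : (splitHom a b ha ⟨x, y * n₁, y * n₂, y * n₃⟩).det = 1 := by
    rw [det_splitHom]
    exact_mod_cast (by push_cast; linear_combination hxy : _ = (1 : ℚ))
  let u : SL2R := ⟨_, hdet⟩
  have hu : u ∈ Λ := by
    rw [← SetLike.mem_coe, hΛ]
    exact ⟨x, y * n₁, y * n₂, y * n₃, by push_cast; linear_combination hxy,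
      by rw [phiMat_eq_splitHom ha]; push_cast; rfl⟩
  exact ⟨u, hu, x, y, by exact_mod_cast hx, by exact_mod_cast hy, by rw [hε]⟩

theorem exists_conjAlgHom_splitHom_eq (ha : 0 ≤ a) (hΛ : IsIntegralNormOneImage a b Λ)
    {g : SL2R} (hg : (conjSubgroup g Λ).relIndex Λ ≠ 0) (n₁ n₂ n₃ : ℤ)
    (hq : 0 < a * n₁ ^ 2 + b * n₂ ^ 2 - a * b * n₃ ^ 2)
    (hns : ¬IsSquare (a * n₁ ^ 2 + b * n₂ ^ 2 - a * b * n₃ ^ 2)) :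
    ∃ X Y : ℚ, 0 < Y ∧ ∃ x' : ℍ[ℚ,a,b],
      conjAlgHom ℚ g (splitHom a b ha ⟨X, Y * n₁, Y * n₂, Y * n₃⟩) = splitHom a b ha x' := by
  obtain ⟨u, hu, x, y, hx, hy, hux⟩ := exists_mem_coe_eq_splitHom ha hΛ n₁ n₂ n₃ hq hns
  obtain ⟨n, hn, -, hun⟩ := Subgroup.exists_pow_mem_of_relIndex_ne_zero hg hu
  obtain ⟨m, rfl⟩ := Nat.exists_eq_add_one_of_ne_zero hn.ne'
  have he : (⟨0, n₁, n₂, n₃⟩ : ℍ[ℚ,a,b]) * ⟨0, n₁, n₂, n₃⟩ =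
      algebraMap ℚ _ (a * n₁ ^ 2 + b * n₂ ^ 2 - a * b * n₃ ^ 2) := by
    rw [algebraMap_eq]; ext <;> simp <;> ring
  obtain ⟨X, Y, -, hY, hpow⟩ := exists_pow_succ_eq_algebraMap_add_smul hq he hx hy m
  have hgu : g * u ^ (m + 1) * g⁻¹ ∈ (Λ : Set SL2R) :=
    mem_conjSubgroup.mp (Subgroup.mem_inf.mp hun).1
  rw [hΛ] at hgu
  obtain ⟨z₀, z₁, z₂, z₃, -, hz⟩ := hgu
  refine ⟨X, Y, hY, ⟨z₀, z₁, z₂, z₃⟩, ?_⟩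
  have hα : (⟨X, Y * n₁, Y * n₂, Y * n₃⟩ : ℍ[ℚ,a,b]) = algebraMap ℚ _ X + Y • ⟨0, n₁, n₂, n₃⟩ := by
    ext <;> simp
  rw [← phiMat_eq_splitHom, ← hz, conjAlgHom_apply, Matrix.SpecialLinearGroup.coe_mul,
    Matrix.SpecialLinearGroup.coe_mul, Matrix.SpecialLinearGroup.coe_pow, hux, hα, ← hpow, map_pow]

theorem conjAlgHom_splitHom_mem_range (ha : 0 < a) (hdiv : NormFormAnisotropic a b)
    (hΛ : IsIntegralNormOneImage a b Λ) {g : SL2R} (hg : (conjSubgroup g Λ).relIndex Λ ≠ 0) (x : ℍ[ℚ,a,b]) :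
    ∃ x', conjAlgHom ℚ g (splitHom a b ha.le x) = splitHom a b ha.le x' := by
  let S : Subalgebra ℚ ℍ[ℚ,a,b] :=
    (splitHom a b ha.le).range.comap ((conjAlgHom ℚ g).comp (splitHom a b ha.le))
  have hmem : ∀ α, (∃ α', conjAlgHom ℚ g (splitHom a b ha.le α) = splitHom a b ha.le α') →
      α ∈ S := fun α ⟨α', h⟩ => ⟨α', h.symm⟩
  have hna := hdiv.not_isSquare_left
  obtain ⟨A₀, A₁, hA₁, hα⟩ :=
    exists_conjAlgHom_splitHom_eq ha.le hΛ hg 1 0 0 (by simpa using ha) (by simpa using hna)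
  obtain ⟨B₀, B₂, B₃, hB, hβ⟩ : ∃ B₀ B₂ B₃ : ℚ, (B₂ ≠ 0 ∨ B₃ ≠ 0) ∧
      ∃ β', conjAlgHom ℚ g (splitHom a b ha.le ⟨B₀, 0, B₂, B₃⟩) = splitHom a b ha.le β' := by
    rcases hdiv.ne_zero_right.lt_or_gt with hb | hb
    · obtain ⟨X, Y, hY, h⟩ := exists_conjAlgHom_splitHom_eq ha.le hΛ hg 0 0 1
        (by simpa using mul_neg_of_pos_of_neg ha hb) (by simpa using hdiv.not_isSquare_neg_mul)
      exact ⟨X, 0, Y, Or.inr hY.ne', by simpa using h⟩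
    · obtain ⟨X, Y, hY, h⟩ := exists_conjAlgHom_splitHom_eq ha.le hΛ hg 0 1 0
        (by simpa using hb) (by simpa using hdiv.not_isSquare_right)
      exact ⟨X, Y, 0, Or.inl hY.ne', by simpa using h⟩
  have hS : Subalgebra.toSubmodule S = ⊤ := by
    rw [eq_top_iff, ← span_one_mul_eq_top hna hA₁.ne' hB, Submodule.span_le]
    rintro _ ⟨i, rfl⟩
    fin_cases i
    exacts [S.one_mem, hmem _ (by simpa using hα), hmem _ hβ,
      S.mul_mem (hmem _ (by simpa using hα)) (hmem _ hβ)]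
  obtain ⟨x', hx'⟩ : x ∈ S := by
    rw [← Subalgebra.mem_toSubmodule, hS]; trivial
  exact ⟨x', hx'.symm⟩

theorem eq_zero_of_conjAlgHom_splitHom_eq_smul (ha : 0 ≤ a) (hdiv : NormFormAnisotropic a b)
    {g : SL2R} {r : ℚ} (hr : r ^ 2 ≠ 1) {x : ℍ[ℚ,a,b]}
    (h : conjAlgHom ℚ g (splitHom a b ha x) = r • splitHom a b ha x) : x = 0 := by
  have hdet := congrArg Matrix.det h
  rw [conjAlgHom_apply, det_mul, det_mul, Matrix.SpecialLinearGroup.det_coe,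
    Matrix.SpecialLinearGroup.det_coe, ← Rat.cast_smul_eq_qsmul ℝ, det_smul, det_splitHom] at hdet
  simp only [one_mul, mul_one, Fintype.card_fin] at hdet
  set n := x.re ^ 2 - a * x.imI ^ 2 - b * x.imJ ^ 2 + a * b * x.imK ^ 2
  have hn : (1 - r ^ 2) * n = 0 := by
    linear_combination (by exact_mod_cast hdet : n = r ^ 2 * n)
  exact hdiv.eq_zero ((mul_eq_zero.mp hn).resolve_left (sub_ne_zero.mpr hr.symm))

theorem sq_eq_one_of_conjAlgHom_eq_smul (ha : 0 < a) (hdiv : NormFormAnisotropic a b)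
    (hΛ : IsIntegralNormOneImage a b Λ) {g : SL2R} (hg : (conjSubgroup g Λ).relIndex Λ ≠ 0)
    {N : Matrix (Fin 2) (Fin 2) ℝ} (hN : N ≠ 0) {r : ℚ} (h : conjAlgHom ℝ g N = (r : ℝ) • N) :
    r ^ 2 = 1 := by
  have hb := hdiv.ne_zero_right
  have hC (y : Fin 4 → ℚ) : ∃ y', conjAlgHom ℝ g (realSplitEquiv ha hb (Rat.castHom ℝ ∘ y)) =
      realSplitEquiv ha hb (Rat.castHom ℝ ∘ y') := by
    obtain ⟨x', hx'⟩ :=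
      conjAlgHom_splitHom_mem_range ha hdiv hΛ hg ((linearEquivTuple a 0 b).symm y)
    refine ⟨linearEquivTuple a 0 b x', ?_⟩
    rw [conjAlgHom_apply, splitHom_linearEquivTuple_symm, ← LinearEquiv.symm_apply_apply
      (linearEquivTuple a 0 b) x', splitHom_linearEquivTuple_symm] at hx'
    rw [realSplitEquiv_apply, realSplitEquiv_apply, conjAlgHom_apply, hx']
  obtain ⟨y, hy, hCy⟩ := LinearMap.exists_eigenvector_of_map (Rat.castHom ℝ)
    (realSplitEquiv ha hb) (conjAlgHom ℝ g).toLinearMap hC hN h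
  by_contra hr
  refine hy ((linearEquivTuple a 0 b).symm.map_eq_zero_iff.mp ?_)
  refine eq_zero_of_conjAlgHom_splitHom_eq_smul ha.le hdiv (g := g) hr ?_
  rw [conjAlgHom_apply, splitHom_linearEquivTuple_symm, ← conjAlgHom_apply ℝ,
    ← Rat.cast_smul_eq_qsmul ℝ]
  simpa using hCy

end Lattice

end QuaternionAlgebra

open QuaternionAlgebra

/-- **Lemma 2**: if `Γ` is commensurable with the cocompact arithmetic lattice
`Λ = φ(A₁(ℤ))` of norm-one integral units of a quaternion division algebra
`A = (a,b/ℚ)`, then for every `z ∈ ℙ¹(ℝ)` (represented by a nonzero vector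
`v`), `C(Γ, z) ∩ ℚ* = {1}`, where `C(Γ, z)` is the image of
`COM(Γ) ∩ P_z` under the eigenvalue-ratio character `χ_z` (an element of `P_z`
acting on `v` by the eigenvalue `c` has `χ_z = c²`). -/
theorem correlator_trivial_cocompact_arithmetic (a b : ℚ) (ha : 0 < a)
    (hdiv : ∀ y₀ y₁ y₂ y₃ : ℚ,
      y₀ ^ 2 - a * y₁ ^ 2 - b * y₂ ^ 2 + a * b * y₃ ^ 2 = 0 →
      y₀ = 0 ∧ y₁ = 0 ∧ y₂ = 0 ∧ y₃ = 0)
    (Γ Λ : Subgroup SL2R)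
    (hΛ : (Λ : Set SL2R) = {g : SL2R | ∃ x₀ x₁ x₂ x₃ : ℤ,
      (x₀ : ℚ) ^ 2 - a * x₁ ^ 2 - b * x₂ ^ 2 + a * b * x₃ ^ 2 = 1 ∧
      (g : Matrix (Fin 2) (Fin 2) ℝ) = phiMat a b x₀ x₁ x₂ x₃})
    (hcomm : Γ.relIndex Λ ≠ 0 ∧ Λ.relIndex Γ ≠ 0)
    (v : Fin 2 → ℝ) (hv : v ≠ 0) :
    {r : ℚ | ∃ g ∈ commenSet Γ, ∃ c : ℝ,
      (g : Matrix (Fin 2) (Fin 2) ℝ).mulVec v = c • v ∧ (r : ℝ) = c ^ 2} = {1} := by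
  ext r
  simp only [Set.mem_ofPred_eq, Set.mem_singleton_iff]
  refine ⟨fun ⟨g, hg, c, hgv, hrc⟩ => ?_, ?_⟩
  · obtain ⟨N, hN, hgN⟩ := exists_conjAlgHom_eq_sq_smul hv hgv
    have hr : r ^ 2 = 1 := sq_eq_one_of_conjAlgHom_eq_smul ha hdiv hΛ
      (relIndex_conjSubgroup_ne_zero hcomm hg) hN (hrc ▸ hgN)
    exact (pow_eq_one_iff_of_nonneg (by exact_mod_cast hrc ▸ sq_nonneg c) two_ne_zero).mp hr
  · rintro rfl
    exact ⟨1, by rw [commenSet_eq_commensurator]; exact one_mem _, 1, by simp, by simp⟩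
end

section
/- Let Γ ≤ SL₂(ℝ) be a lattice, δ ∈ SL₂(ℝ), and consider the subset Y = {(Γh, Γδh) : h ∈ SL₂(ℝ)} of (Γ\SL₂(ℝ)) × (Γ\SL₂(ℝ)). If δ lies in the commensurator COM(Γ) = {g : g⁻¹Γg ∩ Γ has finite index in both Γ and g⁻¹Γg}, then Y is a closed subset of the product. -/
/-- The topology on `SL₂(ℝ)` induced from the space of `2 × 2` real matrices. -/
noncomputable instance : TopologicalSpace SL2R :=
  TopologicalSpace.induced (fun g : SL2R => (g : Matrix (Fin 2) (Fin 2) ℝ)) inferInstance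

/-!
Pulled back along the product of the quotient maps, which is an open quotient map, `Y` becomes
`{(a, b) | b a⁻¹ ∈ ΓδΓ}`, so it suffices that the double coset `ΓδΓ` is closed. Now
`ΓδΓ = δ (δ⁻¹Γδ) Γ`, and since `δ⁻¹Γδ ∩ Γ` has finite index in `Γ`, the set `(δ⁻¹Γδ) Γ` is a
finite union of right cosets of `δ⁻¹Γδ`, a closed subgroup because the discrete subgroup `Γ` is.
-/

open MulOpposite Pointwise DoubleCoset QuotientGroup

section Algebra

variable {G : Type*} [Group G]

def cosetGraph (H : Subgroup G) (δ : G) : Set (Quotient (rightRel H) × Quotient (rightRel H)) :=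
  {y | ∃ h : G, y = (Quotient.mk (rightRel H) h, Quotient.mk (rightRel H) (δ * h))}

theorem preimage_cosetGraph (H : Subgroup G) (δ : G) :
    Prod.map (Quotient.mk (rightRel H)) (Quotient.mk (rightRel H)) ⁻¹' cosetGraph H δ =
      {p : G × G | p.2 * p.1⁻¹ ∈ doubleCoset δ H H} := by
  ext ⟨a, b⟩
  simp only [cosetGraph, Set.mem_preimage, Prod.map_apply, Set.mem_ofPred_eq, Prod.mk.injEq,
    Quotient.eq, rightRel_apply, mem_doubleCoset, SetLike.mem_coe]
  constructor
  · rintro ⟨h, ha, hb⟩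
    exact ⟨(δ * h * b⁻¹)⁻¹, inv_mem hb, h * a⁻¹, ha, by group⟩
  · rintro ⟨x, hx, y, hy, hba⟩
    refine ⟨y * a, by simpa using hy, ?_⟩
    have hb : b = x * δ * y * a := by rw [← hba]; group
    rw [hb]
    simpa [mul_assoc] using inv_mem hx

theorem doubleCoset_self_eq_smul_conj_mul (H : Subgroup G) (δ : G) :
    doubleCoset δ H H = δ • ((H.map (MulAut.conj δ⁻¹).toMonoidHom : Set G) * (H : Set G)) := by
  ext x
  simp only [mem_doubleCoset, Set.mem_smul_set_iff_inv_smul_mem, Set.mem_mul, SetLike.mem_coe,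
    Subgroup.mem_map_equiv, smul_eq_mul]
  constructor
  · rintro ⟨a, ha, b, hb, rfl⟩
    exact ⟨δ⁻¹ * a * δ, by simpa [mul_assoc] using ha, b, hb, by group⟩
  · rintro ⟨k, hk, b, hb, hx⟩
    refine ⟨δ * k * δ⁻¹, by simpa using hk, b, hb, ?_⟩
    rw [← mul_inv_cancel_left δ x, ← hx]
    group

end Algebra

section Topology

variable {G : Type*} [Group G] [TopologicalSpace G] [IsTopologicalGroup G]

theorem isClosed_conj_map {H : Subgroup G} (hH : IsClosed (H : Set G)) (g : G) :
    IsClosed (H.map (MulAut.conj g).toMonoidHom : Set G) := by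
  have hconj : ⇑(MulAut.conj g).toMonoidHom = Homeomorph.mulLeft g ∘ Homeomorph.mulRight g⁻¹ := by
    ext x
    simp [mul_assoc]
  rw [Subgroup.coe_map, hconj]
  exact (Homeomorph.mulLeft g).isClosedMap.comp (Homeomorph.mulRight g⁻¹).isClosedMap _ hH

theorem isClosed_mul_of_relIndex_ne_zero {K H : Subgroup G} (hK : IsClosed (K : Set G))
    (hKH : K.relIndex H ≠ 0) : IsClosed ((K : Set G) * (H : Set G)) := by
  have : Finite (H ⧸ K.subgroupOf H) := Subgroup.index_ne_zero_iff_finite.mp hKH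
  have : Finite (Quotient (rightRel (K.subgroupOf H))) :=
    .of_equiv _ (quotientRightRelEquivQuotientLeftRel _).symm
  -- `K * H` is the union of the right cosets `K h`, and `K h` only depends on `(K ⊓ H) h`.
  let coset : Quotient (rightRel (K.subgroupOf H)) → Set G :=
    Quotient.lift (fun h : H => op (h : G) • (K : Set G)) fun _ _ hrel =>
      (rightCoset_eq_iff K).mpr (Subgroup.mem_subgroupOf.mp (rightRel_apply.mp hrel))
  have hcover : (K : Set G) * (H : Set G) = ⋃ q, coset q := by
    rw [← Set.iUnion_op_smul_set, Set.biUnion_eq_iUnion, ← Quotient.mk_surjective.iUnion_comp]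
    rfl
  rw [hcover]
  exact isClosed_iUnion_of_finite <| Quotient.ind fun h => hK.rightCoset h

theorem isClosed_doubleCoset_self {H : Subgroup G} (hH : IsClosed (H : Set G)) {δ : G}
    (hδ : (H.map (MulAut.conj δ⁻¹).toMonoidHom).relIndex H ≠ 0) :
    IsClosed (doubleCoset δ H H) := by
  rw [doubleCoset_self_eq_smul_conj_mul]
  exact (isClosed_mul_of_relIndex_ne_zero (isClosed_conj_map hH δ⁻¹) hδ).leftCoset δ

theorem isClosed_cosetGraph_of_isClosed_doubleCoset {H : Subgroup G} {δ : G}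
    (hD : IsClosed (doubleCoset δ H H)) : IsClosed (cosetGraph H δ) := by
  have hq : IsOpenQuotientMap (Prod.map (Quotient.mk (rightRel H)) (Quotient.mk (rightRel H))) :=
    MulAction.isOpenQuotientMap_quotientMk.prodMap MulAction.isOpenQuotientMap_quotientMk
  rw [← hq.isQuotientMap.isClosed_preimage, preimage_cosetGraph]
  exact hD.preimage (continuous_snd.mul continuous_fst.inv)

end Topology

instance : IsTopologicalGroup SL2R := Matrix.SpecialLinearGroup.topologicalGroup

instance : T2Space SL2R := Matrix.SpecialLinearGroup.isClosedEmbedding_val.isEmbedding.t2Space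

/-- (4.6)–(4.7): for a lattice `Γ ≤ SL₂(ℝ)` and `δ` in the commensurator of
`Γ`, the set `Y = {(Γh, Γδh) : h ∈ SL₂(ℝ)}` is closed in
`(Γ\SL₂(ℝ)) × (Γ\SL₂(ℝ))`. -/
theorem graph_closed_of_commensurator (Γ : Subgroup SL2R)
    (hdisc : DiscreteTopology Γ)
    (δ : SL2R) (hδ : δ ∈ commenSet Γ) :
    IsClosed {y : Quotient (QuotientGroup.rightRel Γ) × Quotient (QuotientGroup.rightRel Γ) |
      ∃ h : SL2R, y = (Quotient.mk (QuotientGroup.rightRel Γ) h,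
        Quotient.mk (QuotientGroup.rightRel Γ) (δ * h))} := by
  have : DiscreteTopology Γ := hdisc
  exact isClosed_cosetGraph_of_isClosed_doubleCoset <|
    isClosed_doubleCoset_self Subgroup.isClosed_of_discrete hδ.1
end
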